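/- For every Boolean function f : F_2^n → F_2, the nonlinearity satisfies N(f) ≤ 2^{n−1} − 2^{n/2−1}, where the right-hand side is interpreted as a real number (so the claim is (N(f) : ℝ) ≤ 2^{n−1} − 2^{(n/2)−1}). -/

import Mathlib

/-!
With the sign character `χ(u) = (-1)^u` and the Walsh transform `W_f(a) = ∑ₓ χ(f x + a ⬝ x)`,
orthogonality of the characters `x ↦ χ(a ⬝ x)` gives Parseval's identity `∑ₐ W_f(a)² = 4ⁿ`, so
some `|W_f(a)|` is at least `2^{n/2}`. On the other hand `χ(c) W_f(a) = 2ⁿ - 2 d(f, c + a ⬝ x)`,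
and choosing the sign `c` so that the left side is `|W_f(a)|` puts the affine function
`c + a ⬝ x` within distance `2^{n-1} - 2^{n/2-1}` of `f`.
-/

/-- The affine Boolean function `x ↦ a_0 + a_1 x_1 + … + a_n x_n` determined by the
coefficient vector `a ∈ F_2^{n+1}`. -/
def affineFun (n : ℕ) (a : Fin (n + 1) → ZMod 2) : (Fin n → ZMod 2) → ZMod 2 :=
  fun x => a 0 + ∑ i : Fin n, a i.succ * x i

/-- The nonlinearity of a Boolean function: the minimum Hamming distance from `f`
to an affine Boolean function. -/
noncomputable def nonlinearity (n : ℕ) (f : (Fin n → ZMod 2) → ZMod 2) : ℕ :=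
  sInf {d : ℕ | ∃ a : Fin (n + 1) → ZMod 2, d = hammingDist f (affineFun n a)}

open Finset Matrix

noncomputable def signChar : AddChar (ZMod 2) ℝ :=
  AddChar.zmodChar 2 (by norm_num : (-1 : ℝ) ^ 2 = 1)

lemma signChar_apply (u : ZMod 2) : signChar u = if u = 0 then 1 else -1 := by
  rw [signChar, AddChar.zmodChar_apply]
  rcases (by decide : ∀ v : ZMod 2, v = 0 ∨ v = 1) u with rfl | rfl <;> simp [ZMod.val_one]

lemma signChar_eq_one_iff {u : ZMod 2} : signChar u = 1 ↔ u = 0 := by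
  rw [signChar_apply]; split_ifs <;> norm_num [*]

lemma exists_signChar_mul_eq_abs (r : ℝ) : ∃ c : ZMod 2, signChar c * r = |r| := by
  rcases le_or_gt 0 r with hr | hr
  · exact ⟨0, by rw [AddChar.map_zero_eq_one, one_mul, abs_of_nonneg hr]⟩
  · exact ⟨1, by rw [signChar_apply, if_neg one_ne_zero, abs_of_neg hr, neg_one_mul]⟩

lemma sum_signChar_add_eq {α : Type*} [Fintype α] (f g : α → ZMod 2) :
    ∑ x, signChar (f x + g x) = Fintype.card α - 2 * (hammingDist f g : ℝ) := by
  have hsplit := card_filter_add_card_filter_not (s := univ) (fun x => f x = g x)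
  rw [card_univ] at hsplit
  have hsum : ∑ x, signChar (f x + g x) = ∑ x, if f x = g x then (1 : ℝ) else -1 := by
    refine sum_congr rfl fun x _ => ?_
    simp only [signChar_apply, ← CharTwo.sub_eq_add, sub_eq_zero]
  rw [hsum, sum_ite, sum_const, sum_const, hammingDist, ← hsplit]
  push_cast
  ring

lemma sum_signChar_dotProduct {ι : Type*} [Fintype ι] [DecidableEq ι] (z : ι → ZMod 2) :
    ∑ a : ι → ZMod 2, signChar (a ⬝ᵥ z) = if z = 0 then (2 : ℝ) ^ Fintype.card ι else 0 := by
  let ψ : AddChar (ι → ZMod 2) ℝ :=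
    signChar.compAddMonoidHom (AddMonoidHom.mk' (· ⬝ᵥ z) fun a b => add_dotProduct a b z)
  have hψ : ψ = 0 ↔ z = 0 := by
    constructor
    · intro h
      funext i
      simpa [ψ, signChar_eq_one_iff] using DFunLike.congr_fun h (Pi.single i 1)
    · rintro rfl
      ext a
      simp [ψ]
  simpa [ψ, hψ] using AddChar.sum_eq_ite ψ

section Walsh

variable {ι : Type*} [Fintype ι] [DecidableEq ι]

noncomputable def walsh (f : (ι → ZMod 2) → ZMod 2) (a : ι → ZMod 2) : ℝ :=
  ∑ x, signChar (f x + a ⬝ᵥ x)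

lemma sum_walsh_sq (f : (ι → ZMod 2) → ZMod 2) :
    ∑ a, walsh f a ^ 2 = (2 : ℝ) ^ Fintype.card ι * 2 ^ Fintype.card ι := by
  have hsq : ∀ a, walsh f a ^ 2 =
      ∑ x, ∑ y, signChar (f x + f y) * signChar (a ⬝ᵥ (x + y)) := fun a => by
    rw [sq, walsh, sum_mul_sum]
    refine sum_congr rfl fun x _ => sum_congr rfl fun y _ => ?_
    rw [← AddChar.map_add_eq_mul, ← AddChar.map_add_eq_mul, dotProduct_add]
    ring_nf
  have hdiag : ∀ x y : ι → ZMod 2, x + y = 0 ↔ y = x := fun x y => by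
    simp only [funext_iff, Pi.add_apply, Pi.zero_apply, CharTwo.add_eq_zero, eq_comm]
  calc ∑ a, walsh f a ^ 2
      = ∑ x, ∑ y, signChar (f x + f y) * ∑ a : ι → ZMod 2, signChar (a ⬝ᵥ (x + y)) := by
        simp only [hsq, mul_sum]
        rw [sum_comm]
        exact sum_congr rfl fun x _ => sum_comm
    _ = ∑ _x : ι → ZMod 2, (2 : ℝ) ^ Fintype.card ι := by
        simp only [sum_signChar_dotProduct, hdiag, mul_ite, mul_zero, sum_ite_eq', mem_univ,
          if_true, CharTwo.add_self_eq_zero, AddChar.map_zero_eq_one, one_mul]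
    _ = (2 : ℝ) ^ Fintype.card ι * 2 ^ Fintype.card ι := by simp

lemma exists_rpow_le_abs_walsh (f : (ι → ZMod 2) → ZMod 2) :
    ∃ a, (2 : ℝ) ^ ((Fintype.card ι : ℝ) / 2) ≤ |walsh f a| := by
  obtain ⟨a, -, ha⟩ := exists_le_of_sum_le univ_nonempty
    (f := fun _ => (2 : ℝ) ^ Fintype.card ι) (g := fun a => walsh f a ^ 2)
    (by simp [sum_walsh_sq])
  have hpow : ((2 : ℝ) ^ ((Fintype.card ι : ℝ) / 2)) ^ 2 = 2 ^ Fintype.card ι := by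
    rw [← Real.rpow_mul_natCast two_pos.le]
    norm_num
  exact ⟨a, (abs_of_pos (by positivity)).symm.trans_le (sq_le_sq.mp (hpow ▸ ha))⟩

end Walsh

variable {n : ℕ}

lemma affineFun_cons (c : ZMod 2) (a x : Fin n → ZMod 2) :
    affineFun n (Fin.cons c a) x = c + a ⬝ᵥ x := by
  simp [affineFun, dotProduct]

lemma signChar_mul_walsh (f : (Fin n → ZMod 2) → ZMod 2) (a : Fin n → ZMod 2) (c : ZMod 2) :
    signChar c * walsh f a = 2 ^ n - 2 * (hammingDist f (affineFun n (Fin.cons c a)) : ℝ) := by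
  have hcard : (Fintype.card (Fin n → ZMod 2) : ℝ) = 2 ^ n := by simp
  rw [walsh, mul_sum, ← hcard, ← sum_signChar_add_eq]
  simp only [← AddChar.map_add_eq_mul, affineFun_cons]
  simp [add_left_comm]

lemma nonlinearity_le_hammingDist (f : (Fin n → ZMod 2) → ZMod 2) (a : Fin (n + 1) → ZMod 2) :
    nonlinearity n f ≤ hammingDist f (affineFun n a) :=
  Nat.sInf_le ⟨a, rfl⟩

/-- For every Boolean function `f : F_2^n → F_2`,
`N(f) ≤ 2^{n−1} − 2^{n/2−1}`, the right-hand side interpreted as a real number. -/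
theorem stmt13 (n : ℕ) (f : (Fin n → ZMod 2) → ZMod 2) :
    (nonlinearity n f : ℝ) ≤
      (2 : ℝ) ^ ((n : ℝ) - 1) - (2 : ℝ) ^ ((n : ℝ) / 2 - 1) := by
  obtain ⟨a, ha⟩ := exists_rpow_le_abs_walsh f
  obtain ⟨c, hc⟩ := exists_signChar_mul_eq_abs (walsh f a)
  have hdist := signChar_mul_walsh f a c
  have hnl : (nonlinearity n f : ℝ) ≤ hammingDist f (affineFun n (Fin.cons c a)) := by
    exact_mod_cast nonlinearity_le_hammingDist f _
  rw [Fintype.card_fin] at ha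
  rw [Real.rpow_sub two_pos, Real.rpow_sub two_pos, Real.rpow_one, Real.rpow_natCast]
  linarith
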